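/- arXiv:2206.09334 — 3 statements merged into one kernel-verified Lean document; each statement's English description precedes it below -/
import Mathlib

section
/- Let n = 2ℓ+1 and suppose X, Y ⊆ 2^[n] with A ∪ B = [n] a partition, |A| = ℓ. Suppose every X ∈ X\2^A has at most (2/3)|Y| neighbors in the bipartite disjointness graph between X and Y, and that the number of disjoint pairs (X,Y) ∈ X×Y is at least (2−2ε)·2^{2ℓ} while |X|·|Y| ≤ (9/4)·2^{2ℓ}. Then |X ∩ 2^A| ≥ (2/3 − 8ε/3)|X|. -/
open Finset
open scoped Classical

/-! Split `𝒳` into the sets inside `2^A` (at most `|𝒴|` neighbours each) and the rest (at most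
`(2/3)|𝒴|` each). Writing `T = |𝒳 ∩ 2^A|` this bounds the number of disjoint pairs by
`(2|𝒳| + T)|𝒴|/3`; comparing with `(2 - 2ε)2^{2ℓ}` and `|𝒳||𝒴| ≤ (9/4)2^{2ℓ}` gives
`T|𝒴| ≥ (3/2 - 6ε)2^{2ℓ} ≥ (2/3 - 8ε/3)|𝒳||𝒴|`. -/

section EdgeCount

variable {α β : Type*} (r : α → β → Prop) [∀ a b, Decidable (r a b)] (s : Finset α) (t : Finset β)

theorem card_filter_product_eq_sum_card_bipartiteAbove :
    #((s ×ˢ t).filter fun x => r x.1 x.2) = ∑ a ∈ s, #(t.bipartiteAbove r a) := by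
  rw [card_filter, sum_product]
  exact sum_congr rfl fun a _ => (card_filter _ _).symm

theorem card_filter_product_le_of_bipartiteAbove_le (p : α → Prop) [DecidablePred p] {c : ℝ}
    (hc : ∀ a ∈ s, ¬ p a → (#(t.bipartiteAbove r a) : ℝ) ≤ c * #t) :
    (#((s ×ˢ t).filter fun x => r x.1 x.2) : ℝ) ≤ (c * #s + (1 - c) * #(s.filter p)) * #t := by
  have hp : ∀ a ∈ s.filter p, (#(t.bipartiteAbove r a) : ℝ) ≤ #t := fun a _ => by
    exact_mod_cast card_filter_le _ _
  have hnp : ∀ a ∈ s.filter (¬ p ·), (#(t.bipartiteAbove r a) : ℝ) ≤ c * #t := fun a ha => by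
    rw [mem_filter] at ha
    exact hc a ha.1 ha.2
  have hs : (#(s.filter p) : ℝ) + #(s.filter (¬ p ·)) = #s := by
    exact_mod_cast card_filter_add_card_filter_not p
  calc (#((s ×ˢ t).filter fun x => r x.1 x.2) : ℝ)
      = ∑ a ∈ s.filter p, (#(t.bipartiteAbove r a) : ℝ)
        + ∑ a ∈ s.filter (¬ p ·), (#(t.bipartiteAbove r a) : ℝ) := by
        rw [sum_filter_add_sum_filter_not, card_filter_product_eq_sum_card_bipartiteAbove]
        push_cast
        rfl
    _ ≤ #(s.filter p) * #t + #(s.filter (¬ p ·)) * (c * #t) := by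
        gcongr
        · simpa using sum_le_sum hp
        · simpa using sum_le_sum hnp
    _ = (c * #s + (1 - c) * #(s.filter p)) * #t := by
        rw [← hs]
        ring

end EdgeCount

theorem two_thirds_sub_mul_le_of_edge_bounds {ε X Y T N : ℝ} (hX : 0 ≤ X) (hT : 0 ≤ T)
    (hN : 0 < N) (he : (2 - 2 * ε) * N ≤ (2 / 3 * X + (1 - 2 / 3) * T) * Y)
    (hXY : X * Y ≤ 9 / 4 * N) :
    (2 / 3 - 8 * ε / 3) * X ≤ T := by
  rcases le_or_gt (1 / 4) ε with hε | hε
  · nlinarith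
  have hY : 0 < Y := by
    by_contra! hY
    nlinarith
  have hTY : (3 / 2 - 6 * ε) * N ≤ T * Y := by linarith
  refine le_of_mul_le_mul_right ?_ hY
  calc (2 / 3 - 8 * ε / 3) * X * Y = 4 / 9 * (3 / 2 - 6 * ε) * (X * Y) := by ring
    _ ≤ 4 / 9 * (3 / 2 - 6 * ε) * (9 / 4 * N) := by gcongr; linarith
    _ = (3 / 2 - 6 * ε) * N := by ring
    _ ≤ T * Y := hTY

theorem X_mostly_in_cube_general (ℓ : ℕ) (ε : ℝ)
    (𝒳 𝒴 : Finset (Finset (Fin (2 * ℓ + 1))))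
    (A : Finset (Fin (2 * ℓ + 1)))
    (hnb : ∀ X ∈ 𝒳, ¬ X ⊆ A →
      ((𝒴.filter (fun Y => Disjoint X Y)).card : ℝ) ≤ (2 / 3) * 𝒴.card)
    (he : (((𝒳 ×ˢ 𝒴).filter (fun p => Disjoint p.1 p.2)).card : ℝ) ≥
      (2 - 2 * ε) * 2 ^ (2 * ℓ))
    (hXY : ((𝒳.card : ℝ) * 𝒴.card) ≤ (9 / 4) * 2 ^ (2 * ℓ)) :
    (((𝒳.filter (fun X => X ⊆ A)).card : ℝ)) ≥ (2 / 3 - 8 * ε / 3) * 𝒳.card := by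
  have hedges := card_filter_product_le_of_bipartiteAbove_le Disjoint 𝒳 𝒴 (· ⊆ A) hnb
  have hN : (0 : ℝ) < 2 ^ (2 * ℓ) := by positivity
  exact two_thirds_sub_mul_le_of_edge_bounds (by positivity) (by positivity) hN
    (he.trans hedges) hXY

/-- The counting argument of Claim 3: if every `X ∈ 𝒳 \ 2^A` has at most
`(2/3)|𝒴|` neighbors in the bipartite disjointness graph, the number of
disjoint pairs is at least `(2−2ε)2^{2ℓ}` and `|𝒳||𝒴| ≤ (9/4)2^{2ℓ}`, then
`|𝒳 ∩ 2^A| ≥ (2/3 − 8ε/3)|𝒳|`. -/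
theorem X_mostly_in_cube (ℓ : ℕ) (ε : ℝ)
    (𝒳 𝒴 : Finset (Finset (Fin (2 * ℓ + 1))))
    (A B : Finset (Fin (2 * ℓ + 1)))
    (hAB : A ∪ B = Finset.univ) (hdisj : Disjoint A B) (hA : A.card = ℓ)
    (hnb : ∀ X ∈ 𝒳, ¬ X ⊆ A →
      ((𝒴.filter (fun Y => Disjoint X Y)).card : ℝ) ≤ (2 / 3) * 𝒴.card)
    (he : (((𝒳 ×ˢ 𝒴).filter (fun p => Disjoint p.1 p.2)).card : ℝ) ≥
      (2 - 2 * ε) * 2 ^ (2 * ℓ))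
    (hXY : ((𝒳.card : ℝ) * 𝒴.card) ≤ (9 / 4) * 2 ^ (2 * ℓ)) :
    (((𝒳.filter (fun X => X ⊆ A)).card : ℝ)) ≥ (2 / 3 - 8 * ε / 3) * 𝒳.card :=
  X_mostly_in_cube_general ℓ ε 𝒳 𝒴 A hnb he hXY
end

section
/- Let n = 2ℓ+1, let S ⊆ [n] with |S| = ℓ, and let F be a maximal 3-wise intersecting family on [n] with complement family G (closed downwards, ∅ ∈ G, S ∉ G, Sᶜ ∉ G). Set G₁ = {A ∈ G : ∅ ⊊ A ⊊ S}, G₂ = {B ∈ G : ∅ ⊊ B ⊊ Sᶜ}, G₃ = G\(2^S ∪ 2^{Sᶜ}), and suppose |G △ (2^S ∪ 2^{Sᶜ})| ≤ ε·2^ℓ. Then the number of subsets of [n] lying in neither F nor 2^S ∪ 2^{Sᶜ} is at most |G₁|·|G₂| + |G₃|·ε·2^ℓ. -/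
/-!
Write `F₀ = 2^S ∪ 2^{Sᶜ}` (`twoCubes S` below). If `A ∉ F`, maximality gives `X, Y ∈ F` with
`A ∩ X ∩ Y = ∅`, so `A = (A \ X) ∪ (A \ Y)` is a union of two members of the down-closed family `G`.
When moreover `A ∉ F₀`, the pair can be re-chosen in `G₁ × G₂ ∪ (G \ F₀) × (G ∆ F₀)`: it is
`(A ∩ S, A ∩ Sᶜ)` if both halves lie in `G`; if, say, `A ∩ S ∉ G`, a summand inside `S` is
replaced by `A ∩ S ∈ F₀ \ G`, and otherwise neither summand lies in `F₀`. Hence the sets counted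
lie in the image of these pairs under `p ↦ p.1 ∪ p.2`.
-/

open Finset
open scoped Classical symmDiff

/-- `F` is `k`-wise intersecting. -/
def kWiseIntersecting (n k : ℕ) (F : Finset (Finset (Fin n))) : Prop :=
  ∀ G ⊆ F, G.card = k → ∃ x : Fin n, ∀ A ∈ G, x ∈ A

/-- `F` is maximal `k`-wise intersecting. -/
def MaximalKWiseIntersecting (n k : ℕ) (F : Finset (Finset (Fin n))) : Prop :=
  kWiseIntersecting n k F ∧
    ∀ A : Finset (Fin n), A ∉ F → ¬ kWiseIntersecting n k (insert A F)

theorem MaximalKWiseIntersecting.exists_inter_inter_eq_empty {n : ℕ}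
    {F : Finset (Finset (Fin n))} (hF : MaximalKWiseIntersecting n 3 F)
    {A : Finset (Fin n)} (hA : A ∉ F) : ∃ X ∈ F, ∃ Y ∈ F, A ∩ X ∩ Y = ∅ := by
  obtain ⟨H, hHsub, hH3, hH⟩ : ∃ H ⊆ insert A F, H.card = 3 ∧ ∀ x, ∃ B ∈ H, x ∉ B := by
    simpa [kWiseIntersecting] using hF.2 A hA
  have hAH : A ∈ H := by
    by_contra hAH
    obtain ⟨x, hx⟩ := hF.1 H (fun B hB => (mem_insert.mp (hHsub hB)).resolve_left
      (ne_of_mem_of_not_mem hB hAH)) hH3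
    obtain ⟨B, hB, hxB⟩ := hH x
    exact hxB (hx B hB)
  obtain ⟨X, Y, -, hXY⟩ := card_eq_two.mp (by rw [card_erase_of_mem hAH, hH3] :
    (H.erase A).card = 2)
  have hF' : ∀ B ∈ H.erase A, B ∈ F := fun B hB =>
    (mem_insert.mp (hHsub (mem_of_mem_erase hB))).resolve_left (ne_of_mem_erase hB)
  refine ⟨X, hF' X (by simp [hXY]), Y, hF' Y (by simp [hXY]), ?_⟩
  ext x
  obtain ⟨B, hB, hxB⟩ := hH x
  have hBAXY : B = A ∨ B ∈ H.erase A := by rw [mem_erase]; tauto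
  rw [hXY] at hBAXY
  simp only [mem_insert, mem_singleton] at hBAXY
  rcases hBAXY with rfl | rfl | rfl <;> simp [hxB]

theorem MaximalKWiseIntersecting.exists_union_eq {n : ℕ}
    {F G : Finset (Finset (Fin n))} (hF : MaximalKWiseIntersecting n 3 F)
    (hG : G = F.image compl) (hdown : ∀ A ∈ G, ∀ A' ⊆ A, A' ∈ G)
    {A : Finset (Fin n)} (hA : A ∉ F) : ∃ B ∈ G, ∃ C ∈ G, B ∪ C = A := by
  obtain ⟨X, hX, Y, hY, hXY⟩ := hF.exists_inter_inter_eq_empty hA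
  have hcompl : ∀ Z ∈ F, Zᶜ ∈ G := fun Z hZ => hG ▸ mem_image_of_mem _ hZ
  refine ⟨A \ X, hdown _ (hcompl X hX) _ ?_, A \ Y, hdown _ (hcompl Y hY) _ ?_, ?_⟩
  · exact fun x hx => mem_compl.mpr (mem_sdiff.mp hx).2
  · exact fun x hx => mem_compl.mpr (mem_sdiff.mp hx).2
  · rw [← sdiff_inter_distrib_right, ← sdiff_inter_self_left, ← inter_assoc, hXY, sdiff_empty]

section TwoCubes

variable {α : Type*} [Fintype α] [DecidableEq α]

def twoCubes (S : Finset α) : Finset (Finset α) := S.powerset ∪ Sᶜ.powerset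

variable {G : Finset (Finset α)} {S A B C : Finset α}

theorem mem_twoCubes : A ∈ twoCubes S ↔ A ⊆ S ∨ A ⊆ Sᶜ := by
  simp [twoCubes]

theorem twoCubes_compl (S : Finset α) : twoCubes Sᶜ = twoCubes S := by
  rw [twoCubes, twoCubes, compl_compl, union_comm]

theorem inter_mem_twoCubes (A S : Finset α) : A ∩ S ∈ twoCubes S :=
  mem_twoCubes.mpr (Or.inl inter_subset_right)

theorem union_inter_subset_right_of_subset_compl (hB : B ⊆ Sᶜ) : (B ∪ C) ∩ S ⊆ C := by
  intro x hx
  simp only [mem_inter, mem_union] at hx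
  exact hx.1.resolve_left fun hxB => mem_compl.mp (hB hxB) hx.2

theorem inter_mem_filter_of_not_subset_compl (hAS : A ∩ S ∈ G) (hSG : S ∉ G) (hA : ¬ A ⊆ Sᶜ) :
    A ∩ S ∈ G.filter (fun A => ∅ ⊂ A ∧ A ⊂ S) := by
  refine mem_filter.mpr ⟨hAS, empty_ssubset.mpr ?_, Finset.ssubset_iff_subset_ne.mpr
    ⟨inter_subset_right, fun h => hSG (h ▸ hAS)⟩⟩
  obtain ⟨x, hxA, hxS⟩ := not_subset.mp hA
  exact ⟨x, mem_inter.mpr ⟨hxA, by simpa using hxS⟩⟩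

variable (hdown : ∀ A ∈ G, ∀ A' ⊆ A, A' ∈ G)
include hdown

theorem exists_pair_of_subset (hB : B ∈ G) (hC : C ∈ G) (hCS : C ⊆ S)
    (hA : B ∪ C ∉ twoCubes S) (hAS : (B ∪ C) ∩ S ∉ G) :
    ∃ p ∈ (G \ twoCubes S) ×ˢ (G ∆ twoCubes S), p.1 ∪ p.2 = B ∪ C := by
  have hBmixed : B ∉ twoCubes S := by
    intro hBS
    rcases mem_twoCubes.mp hBS with hBS | hBS
    · exact hA (mem_twoCubes.mpr (Or.inl (union_subset hBS hCS)))
    · exact hAS (hdown C hC _ (union_inter_subset_right_of_subset_compl hBS))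
  refine ⟨(B, (B ∪ C) ∩ S), mem_product.mpr ⟨mem_sdiff.mpr ⟨hB, hBmixed⟩,
    mem_symmDiff.mpr (Or.inr ⟨inter_mem_twoCubes _ _, hAS⟩)⟩, ?_⟩
  refine le_antisymm (union_subset subset_union_left inter_subset_left) (union_subset_union_right ?_)
  exact subset_inter subset_union_right hCS

theorem exists_pair_of_inter_not_mem (hB : B ∈ G) (hC : C ∈ G)
    (hA : B ∪ C ∉ twoCubes S) (hAS : (B ∪ C) ∩ S ∉ G) :
    ∃ p ∈ (G \ twoCubes S) ×ˢ (G ∆ twoCubes S), p.1 ∪ p.2 = B ∪ C := by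
  by_cases hCS : C ⊆ S
  · exact exists_pair_of_subset hdown hB hC hCS hA hAS
  by_cases hBS : B ⊆ S
  · rw [union_comm] at hA hAS ⊢
    exact exists_pair_of_subset hdown hC hB hBS hA hAS
  have hmixed : ∀ {D E}, D ∈ G → E ∈ G → ¬ D ⊆ S → (D ∪ E) ∩ S ∉ G → D ∉ twoCubes S :=
    fun hD hE hDS hDE hDmem => (mem_twoCubes.mp hDmem).elim hDS fun hDSc =>
      hDE (hdown _ hE _ (union_inter_subset_right_of_subset_compl hDSc))
  refine ⟨(B, C), mem_product.mpr ⟨mem_sdiff.mpr ⟨hB, hmixed hB hC hBS hAS⟩,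
    mem_symmDiff.mpr (Or.inl ⟨hC, hmixed hC hB hCS (by rwa [union_comm])⟩)⟩, rfl⟩

theorem exists_pair_of_union_not_mem_twoCubes (hSG : S ∉ G) (hScG : Sᶜ ∉ G)
    (hB : B ∈ G) (hC : C ∈ G) (hA : B ∪ C ∉ twoCubes S) :
    ∃ p ∈ G.filter (fun A => ∅ ⊂ A ∧ A ⊂ S) ×ˢ G.filter (fun B => ∅ ⊂ B ∧ B ⊂ Sᶜ) ∪
      (G \ twoCubes S) ×ˢ (G ∆ twoCubes S), p.1 ∪ p.2 = B ∪ C := by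
  by_cases hAS : (B ∪ C) ∩ S ∈ G
  · by_cases hASc : (B ∪ C) ∩ Sᶜ ∈ G
    · refine ⟨((B ∪ C) ∩ S, (B ∪ C) ∩ Sᶜ), mem_union_left _ (mem_product.mpr
        ⟨inter_mem_filter_of_not_subset_compl hAS hSG ?_,
          inter_mem_filter_of_not_subset_compl hASc hScG ?_⟩), sup_inf_inf_compl⟩
      · exact fun h => hA (mem_twoCubes.mpr (Or.inr h))
      · exact fun h => hA (mem_twoCubes.mpr (Or.inl (by rwa [compl_compl] at h)))
    · rw [← twoCubes_compl] at hA ⊢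
      obtain ⟨p, hp, hpA⟩ := exists_pair_of_inter_not_mem hdown hB hC hA hASc
      exact ⟨p, mem_union_right _ hp, hpA⟩
  · obtain ⟨p, hp, hpA⟩ := exists_pair_of_inter_not_mem hdown hB hC hA hAS
    exact ⟨p, mem_union_right _ hp, hpA⟩

end TwoCubes

theorem counting_claim_general (ℓ : ℕ) (S : Finset (Fin (2 * ℓ + 1)))
    (F : Finset (Finset (Fin (2 * ℓ + 1))))
    (hF : MaximalKWiseIntersecting (2 * ℓ + 1) 3 F) (ε : ℝ)
    (G : Finset (Finset (Fin (2 * ℓ + 1)))) (hG : G = F.image (fun B => Bᶜ))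
    (hdown : ∀ A ∈ G, ∀ A', A' ⊆ A → A' ∈ G)
    (hSnot : S ∉ G) (hScnot : Sᶜ ∉ G)
    (hsym : (((G ∆ (S.powerset ∪ Sᶜ.powerset)).card : ℝ)) ≤ ε * 2 ^ ℓ) :
    ((Finset.univ.filter
        (fun A : Finset (Fin (2 * ℓ + 1)) =>
          A ∉ F ∧ A ∉ S.powerset ∪ Sᶜ.powerset)).card : ℝ) ≤
      ((G.filter (fun A => ∅ ⊂ A ∧ A ⊂ S)).card : ℝ) *
          ((G.filter (fun B => ∅ ⊂ B ∧ B ⊂ Sᶜ)).card : ℝ) +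
        (((G \ (S.powerset ∪ Sᶜ.powerset)).card : ℝ)) * ε * 2 ^ ℓ := by
  change ((univ.filter fun A => A ∉ F ∧ A ∉ twoCubes S).card : ℝ) ≤ _ * _ +
    ((G \ twoCubes S).card : ℝ) * ε * 2 ^ ℓ
  change ((G ∆ twoCubes S).card : ℝ) ≤ _ at hsym
  set G₁ := G.filter (fun A => ∅ ⊂ A ∧ A ⊂ S)
  set G₂ := G.filter (fun B => ∅ ⊂ B ∧ B ⊂ Sᶜ)
  have hcover : univ.filter (fun A => A ∉ F ∧ A ∉ twoCubes S) ⊆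
      (G₁ ×ˢ G₂ ∪ (G \ twoCubes S) ×ˢ (G ∆ twoCubes S)).image fun p => p.1 ∪ p.2 := by
    intro A hA
    obtain ⟨-, hAF, hA⟩ := mem_filter.mp hA
    obtain ⟨B, hB, C, hC, rfl⟩ := hF.exists_union_eq hG hdown hAF
    exact mem_image.mpr (exists_pair_of_union_not_mem_twoCubes hdown hSnot hScnot hB hC hA)
  have hcount := (card_le_card hcover).trans <| card_image_le.trans <| (card_union_le _ _).trans_eq
    (by rw [card_product, card_product])
  calc _ ≤ (G₁.card : ℝ) * G₂.card + (G \ twoCubes S).card * (G ∆ twoCubes S).card := by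
        exact_mod_cast hcount
    _ ≤ _ := by rw [mul_assoc _ ε]; gcongr

/-- The counting claim of Section 3: the number of sets in neither `F` nor
`F₀ = 2^S ∪ 2^{Sᶜ}` is at most `|G₁||G₂| + |G₃|·ε·2^ℓ`. -/
theorem counting_claim (ℓ : ℕ) (S : Finset (Fin (2 * ℓ + 1))) (hS : S.card = ℓ)
    (F : Finset (Finset (Fin (2 * ℓ + 1))))
    (hF : MaximalKWiseIntersecting (2 * ℓ + 1) 3 F) (ε : ℝ)
    (G : Finset (Finset (Fin (2 * ℓ + 1)))) (hG : G = F.image (fun B => Bᶜ))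
    (hdown : ∀ A ∈ G, ∀ A', A' ⊆ A → A' ∈ G) (hempty : ∅ ∈ G)
    (hSnot : S ∉ G) (hScnot : Sᶜ ∉ G)
    (hsym : (((G ∆ (S.powerset ∪ Sᶜ.powerset)).card : ℝ)) ≤ ε * 2 ^ ℓ) :
    ((Finset.univ.filter
        (fun A : Finset (Fin (2 * ℓ + 1)) =>
          A ∉ F ∧ A ∉ S.powerset ∪ Sᶜ.powerset)).card : ℝ) ≤
      ((G.filter (fun A => ∅ ⊂ A ∧ A ⊂ S)).card : ℝ) *
          ((G.filter (fun B => ∅ ⊂ B ∧ B ⊂ Sᶜ)).card : ℝ) +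
        (((G \ (S.powerset ∪ Sᶜ.powerset)).card : ℝ)) * ε * 2 ^ ℓ :=
  counting_claim_general ℓ S F hF ε G hG hdown hSnot hScnot hsym
end

section
/- Let n = 2ℓ+1 and let X, Y ⊆ 2^[n] with [n] = A ∪ B a partition, |A| = ℓ, |B| = ℓ+1. Suppose |X ∩ 2^A| ≤ 2^ℓ, |X| ≤ (3/2 + η)2^ℓ and |Y| = (3/2 − η)2^ℓ for some η ≥ 0 with η ≤ 3/2, and that every X ∈ X\2^A is disjoint from at most (2/3)|Y| members of Y. If the number of disjoint pairs in X × Y is at least (2 − 2ε)·2^{2ℓ}, then 2 − 2ε ≤ 2 − η/3 − 2η²/3, and hence η ≤ 6ε. -/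
open Finset

/-!
Count the disjoint pairs row by row. A member of `𝒳` inside `A` is disjoint from at most all
of `𝒴`, any other member from at most `(2/3)|𝒴|`, so the count is at most
`((1/3)|𝒳 ∩ 2^A| + (2/3)|𝒳|)|𝒴| ≤ ((1/3) + (2/3)(3/2 + η))(3/2 - η) 2^{2ℓ} = (2 - η/3 - 2η²/3) 2^{2ℓ}`.
Comparing with the lower bound gives `η/3 + 2η²/3 ≤ 2ε`, hence `η ≤ η + 2η² ≤ 6ε`.
-/

namespace Finset

variable {α β : Type*}

theorem card_filter_product_eq_sum_card_filter (s : Finset α) (t : Finset β)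
    (r : α → β → Prop) [∀ a b, Decidable (r a b)] :
    #((s ×ˢ t).filter fun p => r p.1 p.2) = ∑ a ∈ s, #(t.filter (r a)) := by
  simp only [card_filter, sum_product]

theorem card_filter_product_le (s : Finset α) (t : Finset β) (r : α → β → Prop)
    [∀ a b, Decidable (r a b)] (p : α → Prop) [DecidablePred p] {c : ℝ}
    (hc : ∀ a ∈ s, ¬ p a → (#(t.filter (r a)) : ℝ) ≤ c * #t) :
    (#((s ×ˢ t).filter fun q => r q.1 q.2) : ℝ)
      ≤ (#(s.filter p) + c * (#s - #(s.filter p))) * #t := by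
  have hrows : ∀ a ∈ s, (#(t.filter (r a)) : ℝ) ≤ if p a then (#t : ℝ) else c * #t := by
    intro a ha
    split_ifs with hpa
    · exact_mod_cast card_filter_le t (r a)
    · exact hc a ha hpa
  have hcard : (#(s.filter fun a => ¬ p a) : ℝ) = #s - #(s.filter p) := by
    rw [eq_sub_iff_add_eq', ← Nat.cast_add, card_filter_add_card_filter_not]
  calc (#((s ×ˢ t).filter fun q => r q.1 q.2) : ℝ)
      = ∑ a ∈ s, (#(t.filter (r a)) : ℝ) := by
        rw [card_filter_product_eq_sum_card_filter, Nat.cast_sum]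
    _ ≤ ∑ a ∈ s, if p a then (#t : ℝ) else c * #t := sum_le_sum hrows
    _ = (#(s.filter p) + c * (#s - #(s.filter p))) * #t := by
        rw [sum_ite, sum_const, sum_const, nsmul_eq_mul, nsmul_eq_mul, hcard]
        ring

end Finset

theorem le_two_sub_mul_sq {N a x y η e : ℝ} (ha : a ≤ N) (hx : x ≤ (3 / 2 + η) * N)
    (hy : y = (3 / 2 - η) * N) (hy0 : 0 ≤ y) (he : e ≤ (a + 2 / 3 * (x - a)) * y) :
    e ≤ (2 - η / 3 - 2 * η ^ 2 / 3) * N ^ 2 := by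
  calc e ≤ (a + 2 / 3 * (x - a)) * y := he
    _ = (a / 3 + 2 / 3 * x) * y := by ring
    _ ≤ (N / 3 + 2 / 3 * ((3 / 2 + η) * N)) * y := by gcongr
    _ = (2 - η / 3 - 2 * η ^ 2 / 3) * N ^ 2 := by rw [hy]; ring

theorem eta_bound_general (ℓ : ℕ) (ε η : ℝ)
    (𝒳 𝒴 : Finset (Finset (Fin (2 * ℓ + 1))))
    (A : Finset (Fin (2 * ℓ + 1)))
    (hXA : ((𝒳.filter (fun X => X ⊆ A)).card : ℝ) ≤ 2 ^ ℓ)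
    (hX : (𝒳.card : ℝ) ≤ (3 / 2 + η) * 2 ^ ℓ)
    (hY : (𝒴.card : ℝ) = (3 / 2 - η) * 2 ^ ℓ)
    (hnb : ∀ X ∈ 𝒳, ¬ X ⊆ A →
      ((𝒴.filter (fun Y => Disjoint X Y)).card : ℝ) ≤ (2 / 3) * 𝒴.card)
    (he : (((𝒳 ×ˢ 𝒴).filter (fun p => Disjoint p.1 p.2)).card : ℝ) ≥
      (2 - 2 * ε) * 2 ^ (2 * ℓ)) :
    2 - 2 * ε ≤ 2 - η / 3 - 2 * η ^ 2 / 3 ∧ η ≤ 6 * ε := by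
  have hcount := card_filter_product_le 𝒳 𝒴 Disjoint (· ⊆ A) hnb
  have hupper := le_two_sub_mul_sq hXA hX hY (Nat.cast_nonneg _) hcount
  have hsq : (2 : ℝ) ^ (2 * ℓ) = (2 ^ ℓ) ^ 2 := by rw [← pow_mul, mul_comm]
  rw [hsq, ge_iff_le] at he
  have hmain : 2 - 2 * ε ≤ 2 - η / 3 - 2 * η ^ 2 / 3 :=
    le_of_mul_le_mul_right (he.trans hupper) (by positivity)
  exact ⟨hmain, by linarith [sq_nonneg η]⟩

/-- The estimate establishing the refined bounds `α ≤ 3/2 + 6ε`,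
`β ≥ 3/2 − 6ε` in Section 2. -/
theorem eta_bound (ℓ : ℕ) (ε η : ℝ) (hη0 : 0 ≤ η) (hη1 : η ≤ 3 / 2)
    (𝒳 𝒴 : Finset (Finset (Fin (2 * ℓ + 1))))
    (A B : Finset (Fin (2 * ℓ + 1)))
    (hAB : A ∪ B = Finset.univ) (hdisjAB : Disjoint A B)
    (hA : A.card = ℓ) (hB : B.card = ℓ + 1)
    (hXA : ((𝒳.filter (fun X => X ⊆ A)).card : ℝ) ≤ 2 ^ ℓ)
    (hX : (𝒳.card : ℝ) ≤ (3 / 2 + η) * 2 ^ ℓ)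
    (hY : (𝒴.card : ℝ) = (3 / 2 - η) * 2 ^ ℓ)
    (hnb : ∀ X ∈ 𝒳, ¬ X ⊆ A →
      ((𝒴.filter (fun Y => Disjoint X Y)).card : ℝ) ≤ (2 / 3) * 𝒴.card)
    (he : (((𝒳 ×ˢ 𝒴).filter (fun p => Disjoint p.1 p.2)).card : ℝ) ≥
      (2 - 2 * ε) * 2 ^ (2 * ℓ)) :
    2 - 2 * ε ≤ 2 - η / 3 - 2 * η ^ 2 / 3 ∧ η ≤ 6 * ε :=
  eta_bound_general ℓ ε η 𝒳 𝒴 A hXA hX hY hnb he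
end
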